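/- A distribution D on Q is geodesically invariant for an affine connection ∇ (every geodesic with initial velocity in D stays in D) if and only if ⟨X : Y⟩ ∈ Γ(D) for every X, Y ∈ Γ(D). -/

import Mathlib

/-!
Both conditions are equivalent to `∇_Z Z ∈ Γ(D)` for every section `Z` of `D`, by the
polarization `⟨X : Y⟩ = ∇_{X+Y}(X+Y) - ∇_X X - ∇_Y Y` and `⟨Z : Z⟩ = 2 ∇_Z Z`.

If `D` is geodesically invariant, let `c` be the geodesic with `ċ(0) = Z(x)`. Then
`Z(c(t)) - ċ(t) ∈ D_{c(t)}` vanishes at `t = 0` with derivative `∇_Z Z(x)`; as the graph of `D`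
is closed, this derivative lies in `D_x`.

Conversely, choose a local analytic frame `F₁, …, F_k` of `D` with smooth coordinate map `P`.
The ODE `q̇ = ∑ uᵢ Fᵢ(q)`, `u̇ = -P(q)(∇_V V(q))` with `V = ∑ uᵢ Fᵢ` (this lies in `D` by
hypothesis) has solutions whose lifts `(q, ∑ uᵢ Fᵢ(q))` are geodesics tangent to `D`. By uniqueness
of geodesics, a geodesic starting tangent to `D` stays tangent to `D` for a short time, and
continuous induction on `[a, b]` concludes.
-/

/-- Covariant derivative `(∇_X Y)(x) = DY(x)·X(x) + Γ(x)(X(x))(Y(x))`. -/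
noncomputable def covDeriv {E : Type*} [NormedAddCommGroup E] [NormedSpace ℝ E]
    (Γ : E → E →L[ℝ] E →L[ℝ] E) (X Y : E → E) : E → E :=
  fun x => fderiv ℝ Y x (X x) + Γ x (X x) (Y x)

open Set Filter Topology

theorem exists_contDiffAt_leftInverse {𝕜 E V W : Type*} [NontriviallyNormedField 𝕜]
    [NormedAddCommGroup E] [NormedSpace 𝕜 E] [NormedAddCommGroup V] [NormedSpace 𝕜 V]
    [CompleteSpace V] [NormedAddCommGroup W] [NormedSpace 𝕜 W] {n : WithTop ℕ∞}
    {S : E → V →L[𝕜] W} {x : E} (hS : ContDiffAt 𝕜 n S x) (hx : (S x).HasLeftInverse) :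
    ∃ P : E → W →L[𝕜] V, ContDiffAt 𝕜 n P x ∧ ∀ᶠ y in 𝓝 x, ∀ v, P y (S y v) = v := by
  set L := hx.leftInverse
  set M : E → V →L[𝕜] V := fun y => L.comp (S y)
  have hMx : M x = 1 := ContinuousLinearMap.ext hx.leftInverse_leftInverse
  have hM : ContDiffAt 𝕜 n M x := contDiffAt_const.clm_comp hS
  have hunit : ∀ᶠ y in 𝓝 x, IsUnit (M y) :=
    hM.continuousAt.preimage_mem_nhds (Units.isOpen.mem_nhds (hMx ▸ isUnit_one))
  refine ⟨fun y => (Ring.inverse (M y)).comp L, ?_, ?_⟩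
  · have hinv : ContDiffAt 𝕜 n Ring.inverse (M x) := by
      simpa [hMx] using contDiffAt_ringInverse 𝕜 (n := n) (1 : (V →L[𝕜] V)ˣ)
    exact (hinv.comp x hM).clm_comp contDiffAt_const
  · filter_upwards [hunit] with y hy v
    exact congr($(Ring.inverse_mul_cancel _ hy) v)

section Frame

variable {E : Type*} [NormedAddCommGroup E] [NormedSpace ℝ E] {k : ℕ}

noncomputable def frameMap (F : Fin k → E → E) (y : E) : (Fin k → ℝ) →L[ℝ] E :=
  ∑ i, (ContinuousLinearMap.proj i).smulRight (F i y)

@[simp]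
theorem frameMap_apply (F : Fin k → E → E) (y : E) (u : Fin k → ℝ) :
    frameMap F y u = ∑ i, u i • F i y := by
  simp [frameMap]

theorem contDiff_frameMap {n : WithTop ℕ∞} {F : Fin k → E → E} (hF : ∀ i, ContDiff ℝ n (F i)) :
    ContDiff ℝ n (frameMap F) :=
  ContDiff.sum fun i _ =>
    (ContinuousLinearMap.smulRightL ℝ (Fin k → ℝ) E (ContinuousLinearMap.proj i)).contDiff.comp
      (hF i)

theorem injective_frameMap_iff {F : Fin k → E → E} {y : E} :
    Function.Injective (frameMap F y) ↔ LinearIndependent ℝ fun i => F i y := by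
  rw [linearIndependent_iff_injective_fintypeLinearCombination]
  congr!
  ext u
  simp [Fintype.linearCombination_apply]

theorem frameMap_mem {D : E → Submodule ℝ E} {F : Fin k → E → E} (hFD : ∀ i y, F i y ∈ D y)
    (y : E) (u : Fin k → ℝ) : frameMap F y u ∈ D y := by
  rw [frameMap_apply]
  exact Submodule.sum_mem _ fun i _ => Submodule.smul_mem _ _ (hFD i y)

theorem analyticOnNhd_frameMap_apply {F : Fin k → E → E} (hF : ∀ i, AnalyticOnNhd ℝ (F i) univ)
    (u : Fin k → ℝ) : AnalyticOnNhd ℝ (fun y => frameMap F y u) univ := by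
  simp only [frameMap_apply]
  exact Finset.analyticOnNhd_fun_sum _ fun i _ => (hF i).fun_const_smul

theorem covDeriv_frameMap (Γ : E → E →L[ℝ] E →L[ℝ] E) {F : Fin k → E → E} {y : E}
    (hF : ∀ i, DifferentiableAt ℝ (F i) y) (u : Fin k → ℝ) :
    covDeriv Γ (fun y => frameMap F y u) (fun y => frameMap F y u) y =
      ∑ i, u i • fderiv ℝ (F i) y (frameMap F y u) + Γ y (frameMap F y u) (frameMap F y u) := by
  simp only [covDeriv, frameMap_apply]
  rw [fderiv_fun_sum (A := fun i y => u i • F i y) fun i _ => (hF i).const_smul (u i),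
    sum_apply]
  congr 1
  refine Finset.sum_congr rfl fun i _ => ?_
  rw [fderiv_fun_const_smul (hF i)]
  rfl

theorem HasDerivAt.frameMap_apply {F : Fin k → E → E} {q : ℝ → E} {u : ℝ → Fin k → ℝ}
    {q' : E} {u' : Fin k → ℝ} {t : ℝ} (hF : ∀ i, DifferentiableAt ℝ (F i) (q t))
    (hq : HasDerivAt q q' t) (hu : HasDerivAt u u' t) :
    HasDerivAt (fun s => frameMap F (q s) (u s))
      (frameMap F (q t) u' + ∑ i, u t i • fderiv ℝ (F i) (q t) q') t := by
  have hFq : ∀ i, HasDerivAt (fun s => F i (q s)) (fderiv ℝ (F i) (q t) q') t := fun i =>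
    (hF i).hasFDerivAt.comp_hasDerivAt t hq
  have hsum := HasDerivAt.fun_sum (u := Finset.univ) fun i _ =>
    (hasDerivAt_pi.1 hu i).smul (hFq i)
  simp only [_root_.frameMap_apply]
  refine hsum.congr_deriv ?_
  rw [Finset.sum_add_distrib, add_comm]

def IsSpannedByAnalyticSections (D : E → Submodule ℝ E) : Prop :=
  ∀ x, ∀ w ∈ D x, ∃ X : E → E, AnalyticOnNhd ℝ X univ ∧ X x = w ∧ ∀ y, X y ∈ D y

variable [FiniteDimensional ℝ E] {D : E → Submodule ℝ E}

theorem exists_frameMap_eq {F : Fin k → E → E} (hFD : ∀ i y, F i y ∈ D y) {y : E}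
    (hy : Module.finrank ℝ (D y) = k) (hli : LinearIndependent ℝ fun i => F i y)
    {w : E} (hw : w ∈ D y) : ∃ u, frameMap F y u = w := by
  have hFspan : Submodule.span ℝ (range fun i => F i y) = D y := by
    refine Submodule.eq_of_le_of_finrank_le ?_ ?_
    · exact Submodule.span_le.2 <| range_subset_iff.2 fun i => hFD i y
    · rw [hy, finrank_span_eq_card hli, Fintype.card_fin]
  obtain ⟨u, hu⟩ := (Submodule.mem_span_range_iff_exists_fun ℝ).1 (hFspan ▸ hw)
  exact ⟨u, by rw [frameMap_apply, hu]⟩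

theorem exists_analytic_frame {x : E} (hx : Module.finrank ℝ (D x) = k)
    (hspan : ∀ w ∈ D x, ∃ X : E → E, AnalyticOnNhd ℝ X univ ∧ X x = w ∧ ∀ y, X y ∈ D y) :
    ∃ F : Fin k → E → E, (∀ i, AnalyticOnNhd ℝ (F i) univ) ∧ (∀ i y, F i y ∈ D y) ∧
      LinearIndependent ℝ fun i => F i x := by
  let b := Module.finBasisOfFinrankEq ℝ (D x) hx
  choose F hFa hFx hFD using fun i => hspan (b i) (b i).2
  refine ⟨F, hFa, hFD, ?_⟩
  have hb : LinearIndependent ℝ fun i => (b i : E) :=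
    b.linearIndependent.map' (D x).subtype (Submodule.ker_subtype _)
  simpa [hFx] using hb

theorem exists_local_frame (hrank : ∀ x, Module.finrank ℝ (D x) = k)
    (hspan : IsSpannedByAnalyticSections D)
    (x : E) (n : WithTop ℕ∞) :
    ∃ F : Fin k → E → E, (∀ i, AnalyticOnNhd ℝ (F i) univ) ∧ (∀ i y, F i y ∈ D y) ∧
      ∃ P : E → E →L[ℝ] (Fin k → ℝ), ContDiffAt ℝ n P x ∧
        ∀ᶠ y in 𝓝 x, ∀ w ∈ D y, frameMap F y (P y w) = w := by
  obtain ⟨F, hFa, hFD, hli⟩ := exists_analytic_frame (hrank x) (hspan x)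
  have hS : ContDiff ℝ n (frameMap F) := contDiff_frameMap fun i => (hFa i).contDiff
  obtain ⟨P, hP, hPS⟩ := exists_contDiffAt_leftInverse hS.contDiffAt
    (.of_injective_of_finiteDimensional (injective_frameMap_iff.2 hli))
  refine ⟨F, hFa, hFD, P, hP, ?_⟩
  filter_upwards [hPS] with y hy w hw
  have hinj : Function.Injective (frameMap F y) :=
    Function.LeftInverse.injective (g := P y) hy
  obtain ⟨u, rfl⟩ := exists_frameMap_eq hFD (hrank y) (injective_frameMap_iff.1 hinj) hw
  rw [hy]

theorem isClosed_setOf_snd_mem (hrank : ∀ x, Module.finrank ℝ (D x) = k)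
    (hspan : IsSpannedByAnalyticSections D) :
    IsClosed {p : E × E | p.2 ∈ D p.1} := by
  refine isClosed_of_closure_subset fun p hp => ?_
  obtain ⟨F, hFa, hFD, P, hP, hPF⟩ := exists_local_frame hrank hspan p.1 0
  have hne : (𝓝[{p : E × E | p.2 ∈ D p.1}] p).NeBot := mem_closure_iff_nhdsWithin_neBot.1 hp
  have hcont : ContinuousAt (fun q : E × E => frameMap F q.1 (P q.1 q.2)) p :=
    ((contDiff_frameMap fun i => (hFa i).contDiff (n := 0)).continuous.continuousAt.comp
      continuousAt_fst).clm_apply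
      ((hP.continuousAt.comp continuousAt_fst).clm_apply continuousAt_snd)
  have heq : (fun q : E × E => frameMap F q.1 (P q.1 q.2)) =ᶠ[𝓝[{p : E × E | p.2 ∈ D p.1}] p]
      Prod.snd := by
    filter_upwards [nhdsWithin_le_nhds (continuousAt_fst.preimage_mem_nhds hPF),
      self_mem_nhdsWithin] with q hq hqD
    exact hq q.2 hqD
  have : frameMap F p.1 (P p.1 p.2) = p.2 :=
    tendsto_nhds_unique (hcont.tendsto.mono_left nhdsWithin_le_nhds)
      (continuousAt_snd.tendsto.mono_left nhdsWithin_le_nhds |>.congr' heq.symm)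
  show p.2 ∈ D p.1
  exact this ▸ frameMap_mem hFD _ _

end Frame

theorem ODE_solution_eventuallyEq_nhdsGE {F : Type*} [NormedAddCommGroup F] [NormedSpace ℝ F]
    {v : F → F} {f g : ℝ → F} {t₀ : ℝ} (hv : ContDiffAt ℝ 1 v (f t₀))
    (hf : ∀ᶠ t in 𝓝[≥] t₀, HasDerivAt f (v (f t)) t)
    (hg : ∀ᶠ t in 𝓝[≥] t₀, HasDerivAt g (v (g t)) t) (heq : f t₀ = g t₀) :
    f =ᶠ[𝓝[≥] t₀] g := by
  obtain ⟨K, s, hs, hK⟩ := hv.exists_lipschitzOnWith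
  have hfs : ∀ᶠ t in 𝓝[≥] t₀, f t ∈ s :=
    (hf.self_of_nhdsWithin (mem_Ici.2 le_rfl)).continuousAt.continuousWithinAt hs
  have hgs : ∀ᶠ t in 𝓝[≥] t₀, g t ∈ s :=
    (hg.self_of_nhdsWithin (mem_Ici.2 le_rfl)).continuousAt.continuousWithinAt (heq ▸ hs)
  obtain ⟨b, hb, hsub⟩ := mem_nhdsGE_iff_exists_Icc_subset.1 ((hf.and hfs).and (hg.and hgs))
  refine eventuallyEq_of_mem (Icc_mem_nhdsGE hb) ?_
  exact ODE_solution_unique_of_mem_Icc_right (v := fun _ => v) (s := fun _ => s)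
    (fun _ _ => hK) (HasDerivAt.continuousOn fun t ht => (hsub ht).1.1)
    (fun t ht => (hsub (Ico_subset_Icc_self ht)).1.1.hasDerivWithinAt)
    (fun t ht => (hsub (Ico_subset_Icc_self ht)).1.2)
    (HasDerivAt.continuousOn fun t ht => (hsub ht).2.1)
    (fun t ht => (hsub (Ico_subset_Icc_self ht)).2.1.hasDerivWithinAt)
    (fun t ht => (hsub (Ico_subset_Icc_self ht)).2.2) heq

section Geodesic

variable {E : Type*} [NormedAddCommGroup E] [NormedSpace ℝ E] {k : ℕ}

theorem covDeriv_add_covDeriv (Γ : E → E →L[ℝ] E →L[ℝ] E) {X Y : E → E} {x : E}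
    (hX : DifferentiableAt ℝ X x) (hY : DifferentiableAt ℝ Y x) :
    covDeriv Γ X Y x + covDeriv Γ Y X x =
      covDeriv Γ (X + Y) (X + Y) x - covDeriv Γ X X x - covDeriv Γ Y Y x := by
  simp only [covDeriv, Pi.add_apply, fderiv_add hX hY, add_apply, map_add]
  abel

noncomputable def geodesicSpray (Γ : E → E →L[ℝ] E →L[ℝ] E) (p : E × E) : E × E :=
  (p.2, -Γ p.1 p.2 p.2)

theorem contDiff_geodesicSpray {n : WithTop ℕ∞} {Γ : E → E →L[ℝ] E →L[ℝ] E}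
    (hΓ : ContDiff ℝ n Γ) : ContDiff ℝ n (geodesicSpray Γ) :=
  contDiff_snd.prodMk (((hΓ.comp contDiff_fst).clm_apply contDiff_snd).clm_apply contDiff_snd).neg

theorem hasDerivAt_prodMk_geodesicSpray_iff {Γ : E → E →L[ℝ] E →L[ℝ] E} {c c' : ℝ → E} {t : ℝ} :
    HasDerivAt (fun s => (c s, c' s)) (geodesicSpray Γ (c t, c' t)) t ↔
      HasDerivAt c (c' t) t ∧ HasDerivAt c' (-(Γ (c t) (c' t) (c' t))) t :=
  ⟨fun h => ⟨(hasFDerivAt_fst.comp_hasDerivAt t h :), (hasFDerivAt_snd.comp_hasDerivAt t h :)⟩,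
    fun h => h.1.prodMk h.2⟩

/-- The geodesic equation for velocities in `D`, written in the frame coordinates
`(y, u) ↦ (y, ∑ uᵢ Fᵢ(y))`, where `P y` inverts `frameMap F y` on `D y`. -/
noncomputable def frameGeodesicField (Γ : E → E →L[ℝ] E →L[ℝ] E) (F : Fin k → E → E)
    (P : E → E →L[ℝ] (Fin k → ℝ)) (p : E × (Fin k → ℝ)) : E × (Fin k → ℝ) :=
  (frameMap F p.1 p.2,
    -P p.1 (covDeriv Γ (fun y => frameMap F y p.2) (fun y => frameMap F y p.2) p.1))

theorem contDiffAt_frameGeodesicField {Γ : E → E →L[ℝ] E →L[ℝ] E}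
    {F : Fin k → E → E} {P : E → E →L[ℝ] (Fin k → ℝ)} {x : E} (hΓ : ContDiff ℝ 1 Γ)
    (hF : ∀ i, ContDiff ℝ 2 (F i)) (hP : ContDiffAt ℝ 1 P x) (u : Fin k → ℝ) :
    ContDiffAt ℝ 1 (frameGeodesicField Γ F P) (x, u) := by
  have hv : ContDiff ℝ 1 fun p : E × (Fin k → ℝ) => frameMap F p.1 p.2 :=
    ((contDiff_frameMap fun i => (hF i).of_le one_le_two).comp contDiff_fst).clm_apply
      contDiff_snd
  have hDF : ∀ i, ContDiff ℝ 1 (fderiv ℝ (F i)) := fun i =>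
    (hF i).fderiv_right (by norm_num)
  have hacc : ContDiff ℝ 1 fun p : E × (Fin k → ℝ) =>
      covDeriv Γ (fun y => frameMap F y p.2) (fun y => frameMap F y p.2) p.1 := by
    simp only [covDeriv_frameMap Γ fun i => (hF i).differentiable two_ne_zero _]
    exact (ContDiff.sum fun i _ => ((contDiff_apply ℝ ℝ i).comp contDiff_snd).smul
      (((hDF i).comp contDiff_fst).clm_apply hv)).add
      (((hΓ.comp contDiff_fst).clm_apply hv).clm_apply hv)
  exact hv.contDiffAt.prodMk ((hP.comp _ contDiffAt_fst).clm_apply hacc.contDiffAt).neg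

theorem hasDerivAt_geodesicSpray_of_frameGeodesicField {Γ : E → E →L[ℝ] E →L[ℝ] E}
    {D : E → Submodule ℝ E} {F : Fin k → E → E} {P : E → E →L[ℝ] (Fin k → ℝ)}
    {β : ℝ → E × (Fin k → ℝ)} {t : ℝ}
    (hF : ∀ i, DifferentiableAt ℝ (F i) (β t).1)
    (hβ : HasDerivAt β (frameGeodesicField Γ F P (β t)) t)
    (hP : ∀ w ∈ D (β t).1, frameMap F (β t).1 (P (β t).1 w) = w)
    (hD : covDeriv Γ (fun y => frameMap F y (β t).2) (fun y => frameMap F y (β t).2) (β t).1 ∈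
      D (β t).1) :
    HasDerivAt (fun s => ((β s).1, frameMap F (β s).1 (β s).2))
      (geodesicSpray Γ ((β t).1, frameMap F (β t).1 (β t).2)) t := by
  have hq : HasDerivAt (fun s => (β s).1) (frameMap F (β t).1 (β t).2) t :=
    (hasFDerivAt_fst.comp_hasDerivAt t hβ :)
  have hu : HasDerivAt (fun s => (β s).2) (-P (β t).1 (covDeriv Γ
      (fun y => frameMap F y (β t).2) (fun y => frameMap F y (β t).2) (β t).1)) t :=
    (hasFDerivAt_snd.comp_hasDerivAt t hβ :)
  refine hq.prodMk ((hq.frameMap_apply hF hu).congr_deriv ?_)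
  rw [map_neg, hP _ hD, covDeriv_frameMap Γ hF]
  abel

def IsGeodesicallyInvariant (Γ : E → E →L[ℝ] E →L[ℝ] E) (D : E → Submodule ℝ E) : Prop :=
  ∀ (c c' : ℝ → E) (a b : ℝ), a ≤ b →
    (∀ t ∈ Icc a b, HasDerivAt c (c' t) t) →
    (∀ t ∈ Icc a b, HasDerivAt c' (-(Γ (c t) (c' t) (c' t))) t) →
    c' a ∈ D (c a) → ∀ t ∈ Icc a b, c' t ∈ D (c t)

variable [FiniteDimensional ℝ E] {Γ : E → E →L[ℝ] E →L[ℝ] E} {D : E → Submodule ℝ E}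

theorem covDeriv_self_mem_of_isGeodesicallyInvariant (hΓ : ContDiff ℝ 1 Γ)
    (hD : IsClosed {p : E × E | p.2 ∈ D p.1}) (hGI : IsGeodesicallyInvariant Γ D)
    {Z : E → E} (hZ : ContDiff ℝ 1 Z) (hZD : ∀ y, Z y ∈ D y) (x : E) :
    covDeriv Γ Z Z x ∈ D x := by
  obtain ⟨α, hα0, ε, hε, hα⟩ := (contDiff_geodesicSpray hΓ).contDiffAt (x := (x, Z x))
    |>.exists_forall_mem_closedBall_exists_eq_forall_mem_Ioo_hasDerivAt₀ 0
  have hα₀ : HasDerivAt α (geodesicSpray Γ (α 0)) 0 := hα 0 ⟨by linarith, by linarith⟩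
  have hαIcc : ∀ t ∈ Icc 0 (ε / 2), HasDerivAt α (geodesicSpray Γ (α t)) t := fun t ht =>
    hα t ⟨by linarith [ht.1], by linarith [ht.2]⟩
  have hαD : ∀ t ∈ Icc 0 (ε / 2), (α t).2 ∈ D (α t).1 :=
    hGI (fun t => (α t).1) (fun t => (α t).2) 0 (ε / 2) (by positivity)
      (fun t ht => (hasDerivAt_prodMk_geodesicSpray_iff.1 (hαIcc t ht)).1)
      (fun t ht => (hasDerivAt_prodMk_geodesicSpray_iff.1 (hαIcc t ht)).2)
      (by rw [hα0]; exact hZD x)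
  set w : ℝ → E := fun t => Z (α t).1 - (α t).2
  have hw0 : w 0 = 0 := by simp [w, hα0]
  have hw : HasDerivAt w (covDeriv Γ Z Z x) 0 := by
    have := ((hZ.differentiable one_ne_zero (α 0).1).hasFDerivAt.comp_hasDerivAt 0
      (hasFDerivAt_fst.comp_hasDerivAt 0 hα₀)).sub (hasFDerivAt_snd.comp_hasDerivAt 0 hα₀)
    refine this.congr_deriv ?_
    simp [covDeriv, geodesicSpray, hα0, sub_neg_eq_add]
  have hlim : Tendsto (fun t => ((α t).1, t⁻¹ • w t)) (𝓝[>] 0) (𝓝 (x, covDeriv Γ Z Z x)) := by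
    refine .prodMk_nhds ?_ ?_
    · have : Tendsto (fun t => (α t).1) (𝓝[>] 0) (𝓝 (α 0).1) :=
        hα₀.continuousAt.fst.tendsto.mono_left nhdsWithin_le_nhds
      rwa [hα0] at this
    · simpa [hw0] using hw.tendsto_slope_zero_right
  refine hD.mem_of_tendsto hlim ?_
  filter_upwards [Ioo_mem_nhdsGT (half_pos hε)] with t ht
  exact Submodule.smul_mem _ _ (sub_mem (hZD _) (hαD t (Ioo_subset_Icc_self ht)))

theorem eventually_mem_of_hasDerivAt_geodesicSpray (hΓ : ContDiff ℝ 1 Γ)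
    (hrank : ∀ x, Module.finrank ℝ (D x) = k)
    (hspan : IsSpannedByAnalyticSections D)
    (hself : ∀ Z : E → E, AnalyticOnNhd ℝ Z univ → (∀ y, Z y ∈ D y) →
      ∀ y, covDeriv Γ Z Z y ∈ D y)
    {z : ℝ → E × E} {t₀ : ℝ} (hz : ∀ᶠ t in 𝓝[≥] t₀, HasDerivAt z (geodesicSpray Γ (z t)) t)
    (h₀ : (z t₀).2 ∈ D (z t₀).1) :
    ∀ᶠ t in 𝓝[≥] t₀, (z t).2 ∈ D (z t).1 := by
  set x₀ := (z t₀).1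
  obtain ⟨F, hFa, hFD, P, hP, hPF⟩ := exists_local_frame hrank hspan x₀ 1
  have hFd : ∀ i y, DifferentiableAt ℝ (F i) y := fun i y => (hFa i y trivial).differentiableAt
  obtain ⟨β, hβ₀, ε, hε, hβ⟩ :=
    (contDiffAt_frameGeodesicField hΓ (fun i => (hFa i).contDiff) hP (P x₀ (z t₀).2))
      |>.exists_forall_mem_closedBall_exists_eq_forall_mem_Ioo_hasDerivAt₀ t₀
  set ζ : ℝ → E × E := fun t => ((β t).1, frameMap F (β t).1 (β t).2)
  have hζ₀ : ζ t₀ = z t₀ := by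
    simp only [ζ, hβ₀]
    rw [hPF.self_of_nhds _ h₀]
  have hζ : ∀ᶠ t in 𝓝 t₀, HasDerivAt ζ (geodesicSpray Γ (ζ t)) t := by
    have hβc : ContinuousAt (fun t => (β t).1) t₀ :=
      (hβ t₀ ⟨by linarith, by linarith⟩).continuousAt.fst
    filter_upwards [Ioo_mem_nhds (by linarith : t₀ - ε < t₀) (by linarith : t₀ < t₀ + ε),
      hβc.preimage_mem_nhds (by rw [hβ₀]; exact hPF)] with t ht hPt
    exact hasDerivAt_geodesicSpray_of_frameGeodesicField (hFd · _) (hβ t ht) hPt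
      (hself _ (analyticOnNhd_frameMap_apply hFa _) (frameMap_mem hFD · _) _)
  have hzζ := ODE_solution_eventuallyEq_nhdsGE (contDiff_geodesicSpray hΓ).contDiffAt hz
    (nhdsWithin_le_nhds hζ) hζ₀.symm
  filter_upwards [hzζ] with t ht
  rw [ht]
  exact frameMap_mem hFD _ _

theorem isGeodesicallyInvariant_of_covDeriv_self_mem (hΓ : ContDiff ℝ 1 Γ)
    (hrank : ∀ x, Module.finrank ℝ (D x) = k)
    (hspan : IsSpannedByAnalyticSections D)
    (hself : ∀ Z : E → E, AnalyticOnNhd ℝ Z univ → (∀ y, Z y ∈ D y) →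
      ∀ y, covDeriv Γ Z Z y ∈ D y) :
    IsGeodesicallyInvariant Γ D := by
  intro c c' a b _ hc hc' h₀
  set z : ℝ → E × E := fun t => (c t, c' t)
  have hz : ∀ t ∈ Icc a b, HasDerivAt z (geodesicSpray Γ (z t)) t := fun t ht =>
    hasDerivAt_prodMk_geodesicSpray_iff.2 ⟨hc t ht, hc' t ht⟩
  have hclosed : IsClosed ({t | c' t ∈ D (c t)} ∩ Icc a b) := by
    rw [inter_comm]
    exact (HasDerivAt.continuousOn hz).preimage_isClosed_of_isClosed isClosed_Icc
      (isClosed_setOf_snd_mem hrank hspan)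
  refine hclosed.Icc_subset_of_forall_mem_nhdsWithin h₀ fun t ⟨ht, htab⟩ => ?_
  have hzt : ∀ᶠ s in 𝓝[≥] t, HasDerivAt z (geodesicSpray Γ (z s)) s :=
    mem_of_superset (Icc_mem_nhdsGE htab.2) fun s hs => hz s ⟨htab.1.trans hs.1, hs.2⟩
  exact nhdsWithin_mono _ Ioi_subset_Ici_self
    (eventually_mem_of_hasDerivAt_geodesicSpray hΓ hrank hspan hself hzt ht)

end Geodesic

theorem stmt_10_general {E : Type*} [NormedAddCommGroup E] [NormedSpace ℝ E]
    [FiniteDimensional ℝ E]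
    (Γ : E → E →L[ℝ] E →L[ℝ] E) (hΓ : AnalyticOnNhd ℝ Γ Set.univ)
    (D : E → Submodule ℝ E) (k : ℕ)
    (hrank : ∀ x, Module.finrank ℝ (D x) = k)
    -- `D` is an analytic distribution: it is pointwise spanned by analytic sections
    (hspan : ∀ x, ∀ w ∈ D x, ∃ X : E → E,
      AnalyticOnNhd ℝ X Set.univ ∧ X x = w ∧ ∀ y, X y ∈ D y) :
    -- geodesic invariance
    (∀ (c c' : ℝ → E) (a b : ℝ), a ≤ b →
        (∀ t ∈ Set.Icc a b, HasDerivAt c (c' t) t) →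
        (∀ t ∈ Set.Icc a b, HasDerivAt c' (-(Γ (c t) (c' t) (c' t))) t) →
        c' a ∈ D (c a) → ∀ t ∈ Set.Icc a b, c' t ∈ D (c t))
    ↔
    -- closedness under the symmetric product
    (∀ X Y : E → E, AnalyticOnNhd ℝ X Set.univ → (∀ x, X x ∈ D x) →
        AnalyticOnNhd ℝ Y Set.univ → (∀ x, Y x ∈ D x) →
        ∀ x, covDeriv Γ X Y x + covDeriv Γ Y X x ∈ D x) := by
  change IsGeodesicallyInvariant Γ D ↔ _
  constructor
  · intro hGI X Y hX hXD hY hYD x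
    have hself : ∀ Z : E → E, AnalyticOnNhd ℝ Z univ → (∀ y, Z y ∈ D y) →
        covDeriv Γ Z Z x ∈ D x := fun Z hZ hZD =>
      covDeriv_self_mem_of_isGeodesicallyInvariant hΓ.contDiff (isClosed_setOf_snd_mem hrank hspan)
        hGI hZ.contDiff hZD x
    rw [covDeriv_add_covDeriv Γ (hX x trivial).differentiableAt (hY x trivial).differentiableAt]
    exact sub_mem (sub_mem (hself _ (hX.add hY) fun y => add_mem (hXD y) (hYD y))
      (hself X hX hXD)) (hself Y hY hYD)
  · intro hsymm
    refine isGeodesicallyInvariant_of_covDeriv_self_mem hΓ.contDiff hrank hspan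
      fun Z hZ hZD y => ?_
    simpa [← two_smul ℝ] using D y |>.smul_mem (2⁻¹ : ℝ) (hsymm Z Z hZ hZD hZ hZD y)

/-- for an analytic affine connection `∇` (Christoffel data `Γ`) on an
analytic manifold `Q = E` and an analytic constant-rank distribution `D`, the
distribution `D` is geodesically invariant (every geodesic with initial velocity in `D`
keeps its velocity in `D`) if and only if `⟨X : Y⟩ = ∇_X Y + ∇_Y X ∈ Γ(D)` for all
analytic sections `X, Y` of `D`. -/
theorem stmt_10 {E : Type*} [NormedAddCommGroup E] [NormedSpace ℝ E]
    [FiniteDimensional ℝ E]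
    (Γ : E → E →L[ℝ] E →L[ℝ] E) (hΓ : AnalyticOnNhd ℝ Γ Set.univ)
    (hsym : ∀ x u v, Γ x u v = Γ x v u)
    (D : E → Submodule ℝ E) (k : ℕ)
    (hrank : ∀ x, Module.finrank ℝ (D x) = k)
    -- `D` is an analytic distribution: it is pointwise spanned by analytic sections
    (hspan : ∀ x, ∀ w ∈ D x, ∃ X : E → E,
      AnalyticOnNhd ℝ X Set.univ ∧ X x = w ∧ ∀ y, X y ∈ D y) :
    -- geodesic invariance
    (∀ (c c' : ℝ → E) (a b : ℝ), a ≤ b →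
        (∀ t ∈ Set.Icc a b, HasDerivAt c (c' t) t) →
        (∀ t ∈ Set.Icc a b, HasDerivAt c' (-(Γ (c t) (c' t) (c' t))) t) →
        c' a ∈ D (c a) → ∀ t ∈ Set.Icc a b, c' t ∈ D (c t))
    ↔
    -- closedness under the symmetric product
    (∀ X Y : E → E, AnalyticOnNhd ℝ X Set.univ → (∀ x, X x ∈ D x) →
        AnalyticOnNhd ℝ Y Set.univ → (∀ x, Y x ∈ D x) →
        ∀ x, covDeriv Γ X Y x + covDeriv Γ Y X x ∈ D x) :=
  stmt_10_general Γ hΓ D k hrank hspan
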